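/- arXiv:2507.09808 — 6 statements merged into one kernel-verified Lean document; each statement's English description precedes it below -/
import Mathlib

section
/- For the functional J(μ) = ∫_S η(dy) ∫_0^∞ exp{−μ(B̄(y,t))} dβ(t), the one-sided directional (von Mises) derivative at μ in the direction ν − μ exists and equals ∫_S η(dy) ∫_0^∞ exp{−μ(B̄(y,t))} (μ − ν)(B̄(y,t)) dβ(t), for all μ, ν in M⁺(cvx(S), b). -/
/-!
Along the segment `μₛ = (1 - s) • μ + s • ν` the mass of every set is affine in `s`, so
`J μₛ = ∫ e^{-μ(B)} e^{s (μ(B) - ν(B))} dρ` with `ρ = η|_S ⊗ β|_[0,∞)` (Fubini applies since the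
integrands are bounded). This is a smooth function of `s` on all of `ℝ`, whose derivative at `0`
is obtained by differentiating under the integral sign: the `s`-derivative is dominated by
`e^C · C`, where `C` bounds the total masses of `μ` and `ν`. The one-sided derivative is then
the two-sided one.
-/

open MeasureTheory Metric Set Filter
open scoped ENNReal

noncomputable section

abbrev R2 := EuclideanSpace ℝ (Fin 2)

open Real

theorem hasDerivAt_integral_mul_exp_mul {α : Type*} [MeasurableSpace α] {ρ : Measure α}
    {g d : α → ℝ} (hg : Integrable g ρ) (hd : AEStronglyMeasurable d ρ) {C : ℝ}
    (hdC : ∀ᵐ x ∂ρ, |d x| ≤ C) :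
    HasDerivAt (fun s => ∫ x, g x * exp (s * d x) ∂ρ) (∫ x, g x * d x ∂ρ) 0 := by
  have hF_meas : ∀ s : ℝ, AEStronglyMeasurable (fun x => g x * exp (s * d x)) ρ := fun s =>
    hg.aestronglyMeasurable.mul (continuous_exp.comp_aestronglyMeasurable (hd.const_mul s))
  have hbound : ∀ᵐ x ∂ρ, ∀ s ∈ ball (0 : ℝ) 1,
      ‖g x * exp (s * d x) * d x‖ ≤ |g x| * (exp C * C) := by
    filter_upwards [hdC] with x hx s hs
    have hs1 : |s| ≤ 1 := by simpa using (mem_ball_zero_iff.1 hs).le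
    have hsd : s * d x ≤ C := calc
      s * d x ≤ |s| * |d x| := (le_abs_self _).trans_eq (abs_mul s (d x))
      _ ≤ C := (mul_le_of_le_one_left (abs_nonneg _) hs1).trans hx
    rw [Real.norm_eq_abs, abs_mul, abs_mul, abs_of_pos (exp_pos _), mul_assoc]
    gcongr
  have hdiff : ∀ᵐ x ∂ρ, ∀ s ∈ ball (0 : ℝ) 1,
      HasDerivAt (fun s => g x * exp (s * d x)) (g x * exp (s * d x) * d x) s := by
    refine .of_forall fun x s _ => ?_
    simpa [mul_assoc] using (((hasDerivAt_id s).mul_const (d x)).exp).const_mul (g x)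
  have hderiv := hasDerivAt_integral_of_dominated_loc_of_deriv_le (ball_mem_nhds 0 one_pos)
    (.of_forall hF_meas) (by simpa using hg) (hF_meas 0 |>.mul hd) hbound
    (hg.abs.mul_const _) hdiff
  simpa using hderiv.2

theorem measureReal_ofReal_smul_add_ofReal_smul {α : Type*} [MeasurableSpace α]
    (μ ν : Measure α) [IsFiniteMeasure μ] [IsFiniteMeasure ν] {a b : ℝ} (ha : 0 ≤ a)
    (hb : 0 ≤ b) (A : Set α) :
    (ENNReal.ofReal a • μ + ENNReal.ofReal b • ν).real A = a * μ.real A + b * ν.real A := by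
  rw [measureReal_add_apply (by simp [ENNReal.mul_eq_top]) (by simp [ENNReal.mul_eq_top]),
    measureReal_ennreal_smul_apply, measureReal_ennreal_smul_apply, ENNReal.toReal_ofReal ha,
    ENNReal.toReal_ofReal hb]

theorem abs_measureReal_sub_le {α : Type*} [MeasurableSpace α] (μ ν : Measure α)
    [IsFiniteMeasure μ] [IsFiniteMeasure ν] (A : Set α) :
    |μ.real A - ν.real A| ≤ μ.real univ + ν.real univ :=
  abs_sub_le_of_nonneg_of_le measureReal_nonneg
    ((measureReal_mono (subset_univ A)).trans (le_add_of_nonneg_right measureReal_nonneg))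
    measureReal_nonneg
    ((measureReal_mono (subset_univ A)).trans (le_add_of_nonneg_left measureReal_nonneg))

theorem integral_integral_of_norm_le {α β E : Type*} [MeasurableSpace α] [MeasurableSpace β]
    [NormedAddCommGroup E] [NormedSpace ℝ E] {μ : Measure α} {ν : Measure β}
    [IsFiniteMeasure μ] [IsFiniteMeasure ν] {f : α × β → E}
    (hf : AEStronglyMeasurable f (μ.prod ν)) {C : ℝ} (hC : ∀ z, ‖f z‖ ≤ C) :
    ∫ x, ∫ y, f (x, y) ∂ν ∂μ = ∫ z, f z ∂μ.prod ν :=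
  integral_integral (f := fun x y => f (x, y)) (.of_bound hf C (.of_forall hC))

theorem norm_exp_neg_le_one {x : ℝ} (hx : 0 ≤ x) : ‖exp (-x)‖ ≤ 1 := by
  rw [Real.norm_eq_abs, abs_of_pos (exp_pos _), exp_le_one_iff, neg_nonpos]
  exact hx

section BallMass

variable {E : Type*} [PseudoMetricSpace E] [MeasurableSpace E] [OpensMeasurableSpace E]
  [SecondCountableTopology E]

def ballMass (m : Measure E) (S : Set E) (p : E × ℝ) : ℝ :=
  m.real (closedBall p.1 p.2 ∩ S)

variable {S : Set E}

theorem measurable_ballMass (m : Measure E) [IsFiniteMeasure m] (hS : MeasurableSet S) :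
    Measurable (ballMass m S) := by
  have hclosed : IsClosed {q : (E × ℝ) × E | dist q.2 q.1.1 ≤ q.1.2} :=
    isClosed_le (continuous_snd.dist continuous_fst.fst) continuous_fst.snd
  exact (measurable_measure_prodMk_left
    (hclosed.measurableSet.inter (hS.preimage measurable_snd))).ennreal_toReal

variable (η : Measure E) [IsFiniteMeasure η] (β : Measure ℝ) [IsFiniteMeasure β] (T : Set ℝ)
  (μ ν : Measure E) [IsFiniteMeasure μ] [IsFiniteMeasure ν]

theorem integral_integral_exp_neg_measure_mix (hS : MeasurableSet S) {s : ℝ}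
    (hs : s ∈ Icc (0 : ℝ) 1) :
    ∫ y in S, ∫ t in T,
        exp (-((ENNReal.ofReal (1 - s) • μ + ENNReal.ofReal s • ν) (closedBall y t ∩ S)).toReal)
          ∂β ∂η =
      ∫ p, exp (-ballMass μ S p) * exp (s * (ballMass μ S p - ballMass ν S p))
        ∂(η.restrict S).prod (β.restrict T) := by
  set m := ENNReal.ofReal (1 - s) • μ + ENNReal.ofReal s • ν
  have hmix : ballMass m S = fun p => (1 - s) * ballMass μ S p + s * ballMass ν S p :=
    funext fun p => measureReal_ofReal_smul_add_ofReal_smul μ ν (by linarith [hs.2]) hs.1 _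
  have hmeas : Measurable (ballMass m S) := hmix ▸
    ((measurable_ballMass μ hS).const_mul _).add ((measurable_ballMass ν hS).const_mul _)
  refine (integral_integral_of_norm_le (f := fun p => exp (-ballMass m S p))
    hmeas.neg.exp.aestronglyMeasurable fun _ => norm_exp_neg_le_one measureReal_nonneg).trans ?_
  rw [hmix]
  congr 1 with p
  rw [← exp_add]
  ring_nf

theorem integral_integral_exp_neg_measure_mul_sub (hS : MeasurableSet S) :
    ∫ y in S, ∫ t in T, exp (-(μ (closedBall y t ∩ S)).toReal) *
        ((μ (closedBall y t ∩ S)).toReal - (ν (closedBall y t ∩ S)).toReal) ∂β ∂η =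
      ∫ p, exp (-ballMass μ S p) * (ballMass μ S p - ballMass ν S p)
        ∂(η.restrict S).prod (β.restrict T) :=
  integral_integral_of_norm_le
    ((measurable_ballMass μ hS).neg.exp.mul
      ((measurable_ballMass μ hS).sub (measurable_ballMass ν hS))).aestronglyMeasurable
    fun _ => (norm_mul _ _).trans_le <|
      (mul_le_of_le_one_left (norm_nonneg _) (norm_exp_neg_le_one measureReal_nonneg)).trans
        (abs_measureReal_sub_le μ ν _)

theorem hasDerivAt_integral_exp_neg_ballMass_mul_exp (hS : MeasurableSet S) :
    HasDerivAt
      (fun s => ∫ p, exp (-ballMass μ S p) * exp (s * (ballMass μ S p - ballMass ν S p))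
        ∂(η.restrict S).prod (β.restrict T))
      (∫ p, exp (-ballMass μ S p) * (ballMass μ S p - ballMass ν S p)
        ∂(η.restrict S).prod (β.restrict T)) 0 :=
  hasDerivAt_integral_mul_exp_mul
    (.of_bound (measurable_ballMass μ hS).neg.exp.aestronglyMeasurable 1
      (.of_forall fun _ => norm_exp_neg_le_one measureReal_nonneg))
    ((measurable_ballMass μ hS).sub (measurable_ballMass ν hS)).aestronglyMeasurable
    (.of_forall fun _ => abs_measureReal_sub_le μ ν _)

end BallMass

theorem vonMises_derivative_exists_general
    (S : Set R2) (hS : IsCompact S)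
    (η : Measure R2) [IsProbabilityMeasure η]
    (βm : Measure ℝ) [IsFiniteMeasure βm]
    (b : ℝ)
    (J : Measure R2 → ℝ)
    (hJ : ∀ μ : Measure R2, J μ =
      ∫ y in S, (∫ t in Set.Ici (0:ℝ),
        Real.exp (-(μ (Metric.closedBall y t ∩ S)).toReal) ∂βm) ∂η)
    (μ ν : Measure R2)
    (hμb : μ Set.univ = ENNReal.ofReal b)
    (hνb : ν Set.univ = ENNReal.ofReal b) :
    Tendsto (fun s : ℝ =>
        (J (ENNReal.ofReal (1 - s) • μ + ENNReal.ofReal s • ν) - J μ) / s)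
      (nhdsWithin (0:ℝ) (Set.Ioi 0))
      (nhds (∫ y in S, (∫ t in Set.Ici (0:ℝ),
          Real.exp (-(μ (Metric.closedBall y t ∩ S)).toReal) *
            ((μ (Metric.closedBall y t ∩ S)).toReal
              - (ν (Metric.closedBall y t ∩ S)).toReal) ∂βm) ∂η)) := by
  have : IsFiniteMeasure μ := ⟨hμb ▸ ENNReal.ofReal_lt_top⟩
  have : IsFiniteMeasure ν := ⟨hνb ▸ ENNReal.ofReal_lt_top⟩
  have hSm : MeasurableSet S := hS.isClosed.measurableSet
  have hJμ : J μ = J (ENNReal.ofReal (1 - 0) • μ + ENNReal.ofReal 0 • ν) := by simp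
  rw [integral_integral_exp_neg_measure_mul_sub η βm _ μ ν hSm]
  refine (hasDerivAt_integral_exp_neg_ballMass_mul_exp η βm _ μ ν hSm).tendsto_slope_zero_right
    |>.congr' ?_
  filter_upwards [Ioo_mem_nhdsGT one_pos] with s ⟨hs0, hs1⟩
  rw [hJμ, hJ, hJ, integral_integral_exp_neg_measure_mix η βm _ μ ν hSm ⟨hs0.le, hs1.le⟩,
    integral_integral_exp_neg_measure_mix η βm _ μ ν hSm ⟨le_rfl, zero_le_one⟩, zero_add,
    smul_eq_mul, div_eq_inv_mul]

/-- the one-sided directional (von Mises) derivative of `J` at `μ` in the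
direction `ν − μ` exists and equals
`∫_S ∫_0^∞ exp(−μ(B̄(y,t))) (μ − ν)(B̄(y,t)) dβ(t) dη(y)`. -/
theorem vonMises_derivative_exists
    (S : Set R2) (hS : IsCompact S)
    (K : Set R2) (hK : K = closure (convexHull ℝ S))
    (η : Measure R2) [IsProbabilityMeasure η] (hη : η Sᶜ = 0)
    (βm : Measure ℝ) [IsFiniteMeasure βm]
    (b : ℝ) (hb : 0 < b)
    (J : Measure R2 → ℝ)
    (hJ : ∀ μ : Measure R2, J μ =
      ∫ y in S, (∫ t in Set.Ici (0:ℝ),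
        Real.exp (-(μ (Metric.closedBall y t ∩ S)).toReal) ∂βm) ∂η)
    (μ ν : Measure R2)
    (hμK : μ Kᶜ = 0) (hμb : μ Set.univ = ENNReal.ofReal b)
    (hνK : ν Kᶜ = 0) (hνb : ν Set.univ = ENNReal.ofReal b) :
    Tendsto (fun s : ℝ =>
        (J (ENNReal.ofReal (1 - s) • μ + ENNReal.ofReal s • ν) - J μ) / s)
      (nhdsWithin (0:ℝ) (Set.Ioi 0))
      (nhds (∫ y in S, (∫ t in Set.Ici (0:ℝ),
          Real.exp (-(μ (Metric.closedBall y t ∩ S)).toReal) *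
            ((μ (Metric.closedBall y t ∩ S)).toReal
              - (ν (Metric.closedBall y t ∩ S)).toReal) ∂βm) ∂η)) :=
  vonMises_derivative_exists_general S hS η βm b J hJ μ ν hμb hνb
end
end

section
/- For any fixed y and t, and finite measures μ₁, μ₂ of mass at most b on the same space with μ₁(A) ≥ μ₂(A), the bound |exp(−μ₁(A)) − exp(−μ₂(A))| ≤ μ₁(A) − μ₂(A) holds; consequently, the influence functions of J satisfy sup_x |h_{μ₁}(x) − h_{μ₂}(x)| ≤ (2b+1)·‖μ₁ − μ₂‖, where ‖·‖ is the total variation distance; i.e., J is (2b+1)-smooth. -/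
open MeasureTheory Metric Set
open scoped ENNReal

noncomputable section

/-!
Write `m = μ(B̄(y,t) ∩ S) ∈ [0, b]` and `c = b·1{‖y - x‖ ≤ t} ∈ [0, b]`. Since `t ↦ e^{-t}` is
`1`-Lipschitz and bounded by `1` on `[0, ∞)`, splitting
`(m₁ - c)e^{-m₁} - (m₂ - c)e^{-m₂} = (m₁ - m₂)e^{-m₁} + (m₂ - c)(e^{-m₁} - e^{-m₂})`
bounds the integrand difference by `(b + 1)|m₁ - m₂| ≤ (b + 1)‖μ₁ - μ₂‖`. Integrating against
`β` and `η`, both of mass at most `1`, preserves this bound, which is even better than `2b + 1`.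
-/

open Real in
lemma abs_exp_neg_sub_exp_neg_le {a c : ℝ} (ha : 0 ≤ a) (hc : 0 ≤ c) :
    |exp (-a) - exp (-c)| ≤ |a - c| := by
  wlog hca : c ≤ a generalizing a c
  · rw [abs_sub_comm, abs_sub_comm a]
    exact this hc ha (le_of_not_ge hca)
  have hfactor : exp (-c) - exp (-a) = exp (-c) * (1 - exp (-(a - c))) := by
    rw [mul_sub, ← exp_add]
    ring_nf
  have hc1 : exp (-c) ≤ 1 := exp_le_one_iff.2 (by linarith)
  have hac1 : exp (-(a - c)) ≤ 1 := exp_le_one_iff.2 (by linarith)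
  rw [abs_sub_comm, hfactor, abs_of_nonneg (sub_nonneg.2 hca),
    abs_of_nonneg (mul_nonneg (exp_pos _).le (sub_nonneg.2 hac1))]
  calc exp (-c) * (1 - exp (-(a - c))) ≤ 1 * (a - c) :=
        mul_le_mul hc1 (by linarith [one_sub_le_exp_neg (a - c)]) (sub_nonneg.2 hac1) zero_le_one
    _ = a - c := one_mul _

open Real in
lemma abs_sub_mul_exp_neg_le {m c b : ℝ} (hm : 0 ≤ m) (hmc : |m - c| ≤ b) :
    |(m - c) * exp (-m)| ≤ b := by
  rw [abs_mul, abs_of_pos (exp_pos _)]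
  calc |m - c| * exp (-m) ≤ b * 1 :=
        mul_le_mul hmc (exp_le_one_iff.2 (by linarith)) (exp_pos _).le ((abs_nonneg _).trans hmc)
    _ = b := mul_one b

open Real in
lemma abs_sub_mul_exp_neg_sub_le {m₁ m₂ c b : ℝ} (h₁ : 0 ≤ m₁) (h₂ : 0 ≤ m₂)
    (hmc : |m₂ - c| ≤ b) :
    |(m₁ - c) * exp (-m₁) - (m₂ - c) * exp (-m₂)| ≤ (b + 1) * |m₁ - m₂| := by
  have hexp : |exp (-m₁)| ≤ 1 := by
    rw [abs_of_pos (exp_pos _)]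
    exact exp_le_one_iff.2 (by linarith)
  calc |(m₁ - c) * exp (-m₁) - (m₂ - c) * exp (-m₂)|
      = |(m₁ - m₂) * exp (-m₁) + (m₂ - c) * (exp (-m₁) - exp (-m₂))| := by ring_nf
    _ ≤ |m₁ - m₂| * |exp (-m₁)| + |m₂ - c| * |exp (-m₁) - exp (-m₂)| := by
        rw [← abs_mul, ← abs_mul]
        exact abs_add_le _ _
    _ ≤ |m₁ - m₂| * 1 + b * |m₁ - m₂| :=
        add_le_add (mul_le_mul_of_nonneg_left hexp (abs_nonneg _))
          (mul_le_mul hmc (abs_exp_neg_sub_exp_neg_le h₁ h₂) (abs_nonneg _)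
            ((abs_nonneg _).trans hmc))
    _ = (b + 1) * |m₁ - m₂| := by ring

lemma norm_integral_sub_integral_le {α F : Type*} [MeasurableSpace α] [NormedAddCommGroup F]
    [NormedSpace ℝ F] {ν : Measure α} (hν : ν univ ≤ 1) {f g : α → F} (hf : Integrable f ν)
    (hg : Integrable g ν) {C : ℝ} (hC : 0 ≤ C) (hfg : ∀ x, ‖f x - g x‖ ≤ C) :
    ‖∫ x, f x ∂ν - ∫ x, g x ∂ν‖ ≤ C := by
  have : IsFiniteMeasure ν := ⟨hν.trans_lt ENNReal.one_lt_top⟩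
  rw [← integral_sub hf hg]
  calc ‖∫ x, (f x - g x) ∂ν‖ ≤ C * ν.real univ :=
        norm_integral_le_of_norm_le_const (ae_of_all _ hfg)
    _ ≤ C := mul_le_of_le_one_right hC (ENNReal.toReal_le_of_le_ofReal zero_le_one (by simpa))

lemma norm_integral_integral_sub_le {α β F : Type*} [MeasurableSpace α] [MeasurableSpace β]
    [NormedAddCommGroup F] [NormedSpace ℝ F] {μ : Measure α} {ν : Measure β}
    (hμ : μ univ ≤ 1) (hν : ν univ ≤ 1) {f g : α × β → F}
    (hf : StronglyMeasurable f) (hg : StronglyMeasurable g) {B C : ℝ}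
    (hfB : ∀ p, ‖f p‖ ≤ B) (hgB : ∀ p, ‖g p‖ ≤ B) (hC : 0 ≤ C) (hfg : ∀ p, ‖f p - g p‖ ≤ C) :
    ‖∫ x, ∫ y, f (x, y) ∂ν ∂μ - ∫ x, ∫ y, g (x, y) ∂ν ∂μ‖ ≤ C := by
  have : IsFiniteMeasure μ := ⟨hμ.trans_lt ENNReal.one_lt_top⟩
  have : IsFiniteMeasure ν := ⟨hν.trans_lt ENNReal.one_lt_top⟩
  have integrable_section : ∀ {h : α × β → F}, StronglyMeasurable h → (∀ p, ‖h p‖ ≤ B) →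
      ∀ x, Integrable (fun y => h (x, y)) ν := fun hh hhB x =>
    .of_bound (hh.comp_measurable measurable_prodMk_left).aestronglyMeasurable B
      (ae_of_all _ fun y => hhB (x, y))
  have integrable_integral : ∀ {h : α × β → F}, StronglyMeasurable h → (∀ p, ‖h p‖ ≤ B) →
      Integrable (fun x => ∫ y, h (x, y) ∂ν) μ := fun hh hhB =>
    .of_bound hh.integral_prod_right'.aestronglyMeasurable (B * ν.real univ)
      (ae_of_all _ fun x => norm_integral_le_of_norm_le_const (ae_of_all _ fun y => hhB (x, y)))
  exact norm_integral_sub_integral_le hμ (integrable_integral hf hfB) (integrable_integral hg hgB)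
    hC fun x => norm_integral_sub_integral_le hν (integrable_section hf hfB x)
      (integrable_section hg hgB x) hC fun y => hfg (x, y)

section TotalVariation

variable {α : Type*} [MeasurableSpace α]

def tvDist (μ₁ μ₂ : Measure α) : ℝ :=
  sSup {r : ℝ | ∃ A : Set α, MeasurableSet A ∧ r = |(μ₁ A).toReal - (μ₂ A).toReal|}

variable (μ₁ μ₂ : Measure α) [IsFiniteMeasure μ₁] [IsFiniteMeasure μ₂]

lemma abs_toReal_sub_le_tvDist {A : Set α} (hA : MeasurableSet A) :
    |(μ₁ A).toReal - (μ₂ A).toReal| ≤ tvDist μ₁ μ₂ := by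
  have hmono : ∀ (μ : Measure α) [IsFiniteMeasure μ] (A : Set α),
      (μ A).toReal ≤ (μ univ).toReal := fun μ _ A =>
    ENNReal.toReal_mono (measure_ne_top μ univ) (measure_mono (subset_univ A))
  refine le_csSup ⟨(μ₁ univ).toReal + (μ₂ univ).toReal, ?_⟩ ⟨A, hA, rfl⟩
  rintro _ ⟨A, -, rfl⟩
  exact abs_sub_le_of_nonneg_of_le ENNReal.toReal_nonneg
    ((hmono μ₁ A).trans (le_add_of_nonneg_right ENNReal.toReal_nonneg)) ENNReal.toReal_nonneg
    ((hmono μ₂ A).trans (le_add_of_nonneg_left ENNReal.toReal_nonneg))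

lemma tvDist_nonneg : 0 ≤ tvDist μ₁ μ₂ :=
  (abs_nonneg _).trans (abs_toReal_sub_le_tvDist μ₁ μ₂ MeasurableSet.empty)

end TotalVariation

lemma abs_toReal_measure_sub_ite_le {α : Type*} [MeasurableSpace α] {b : ℝ} (hb : 0 ≤ b)
    {μ : Measure α} (hμ : μ univ ≤ ENNReal.ofReal b) (A : Set α) (P : Prop) [Decidable P] :
    |(μ A).toReal - if P then b else 0| ≤ b :=
  abs_sub_le_of_nonneg_of_le ENNReal.toReal_nonneg
    (ENNReal.toReal_le_of_le_ofReal hb ((measure_mono (subset_univ A)).trans hμ))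
    (by split_ifs <;> simp [hb]) (by split_ifs <;> simp [hb])

lemma measurable_measure_closedBall_inter {E : Type*} [PseudoMetricSpace E] [MeasurableSpace E]
    [OpensMeasurableSpace E] [SecondCountableTopology E] {S : Set E} (hS : MeasurableSet S)
    (μ : Measure E) [SFinite μ] :
    Measurable fun p : E × ℝ => μ (closedBall p.1 p.2 ∩ S) :=
  measurable_measure_prodMk_left (s := {q : (E × ℝ) × E | dist q.2 q.1.1 ≤ q.1.2 ∧ q.2 ∈ S})
    ((measurableSet_le (measurable_snd.dist measurable_fst.fst) measurable_fst.snd).inter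
      (measurable_snd hS))

section Influence

variable {E : Type*} [NormedAddCommGroup E] [MeasurableSpace E] {S : Set E} {b : ℝ} (x : E)

/-- The integrand of `h_μ(x)` at `p = (y, t)`. -/
def influenceIntegrand (S : Set E) (b : ℝ) (μ : Measure E) (x : E) (p : E × ℝ) : ℝ :=
  ((μ (closedBall p.1 p.2 ∩ S)).toReal - if ‖p.1 - x‖ ≤ p.2 then b else 0) *
    Real.exp (-(μ (closedBall p.1 p.2 ∩ S)).toReal)

lemma measurable_influenceIntegrand [BorelSpace E] [SecondCountableTopology E]
    (hS : MeasurableSet S) (μ : Measure E) [SFinite μ] :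
    Measurable (influenceIntegrand S b μ x) := by
  have hmeas := (measurable_measure_closedBall_inter hS μ).ennreal_toReal
  have hind : Measurable fun p : E × ℝ => if ‖p.1 - x‖ ≤ p.2 then b else 0 :=
    Measurable.ite (measurableSet_le (continuous_fst.sub continuous_const).norm.measurable
      measurable_snd) measurable_const measurable_const
  exact (hmeas.sub hind).mul hmeas.neg.exp

lemma abs_influenceIntegrand_le (hb : 0 ≤ b) {μ : Measure E} (hμ : μ univ ≤ ENNReal.ofReal b)
    (p : E × ℝ) : |influenceIntegrand S b μ x p| ≤ b :=
  abs_sub_mul_exp_neg_le ENNReal.toReal_nonneg (abs_toReal_measure_sub_ite_le hb hμ _ _)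

lemma abs_influenceIntegrand_sub_le (hb : 0 ≤ b) {μ₁ μ₂ : Measure E}
    (hμ₂ : μ₂ univ ≤ ENNReal.ofReal b) (p : E × ℝ) :
    |influenceIntegrand S b μ₁ x p - influenceIntegrand S b μ₂ x p| ≤
      (b + 1) * |(μ₁ (closedBall p.1 p.2 ∩ S)).toReal - (μ₂ (closedBall p.1 p.2 ∩ S)).toReal| :=
  abs_sub_mul_exp_neg_sub_le ENNReal.toReal_nonneg ENNReal.toReal_nonneg
    (abs_toReal_measure_sub_ite_le hb hμ₂ _ _)

end Influence

theorem influence_function_smoothness_general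
    (S : Set R2) (hS : IsCompact S)
    (η : Measure R2) [IsProbabilityMeasure η]
    (βm : Measure ℝ) (hβm : βm (Set.Ici (0:ℝ)) = 1)
    (b : ℝ) (hb : 0 < b)
    (h : Measure R2 → R2 → ℝ)
    (hh : ∀ (μ : Measure R2) (x : R2), h μ x =
      ∫ y in S, (∫ t in Set.Ici (0:ℝ),
        ((μ (Metric.closedBall y t ∩ S)).toReal - (if ‖y - x‖ ≤ t then b else 0)) *
          Real.exp (-(μ (Metric.closedBall y t ∩ S)).toReal) ∂βm) ∂η)
    (μ₁ μ₂ : Measure R2)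
    (h₁b : μ₁ Set.univ = ENNReal.ofReal b)
    (h₂b : μ₂ Set.univ = ENNReal.ofReal b)
    (tv : ℝ)
    (htv : tv = sSup {r : ℝ | ∃ A : Set R2, MeasurableSet A ∧
        r = |(μ₁ A).toReal - (μ₂ A).toReal|}) :
    (∀ A : Set R2, MeasurableSet A → μ₂ A ≤ μ₁ A →
      |Real.exp (-(μ₁ A).toReal) - Real.exp (-(μ₂ A).toReal)|
        ≤ (μ₁ A).toReal - (μ₂ A).toReal) ∧
    (∀ x : R2, |h μ₁ x - h μ₂ x| ≤ (2 * b + 1) * tv) := by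
  have : IsFiniteMeasure μ₁ := ⟨by simp [h₁b]⟩
  have : IsFiniteMeasure μ₂ := ⟨by simp [h₂b]⟩
  replace htv : tv = tvDist μ₁ μ₂ := htv
  refine ⟨fun A _ hle => ?_, fun x => ?_⟩
  · have hle' := ENNReal.toReal_mono (measure_ne_top μ₁ A) hle
    simpa [abs_of_nonneg (sub_nonneg.2 hle')] using
      abs_exp_neg_sub_exp_neg_le (μ₁ A).toReal_nonneg (μ₂ A).toReal_nonneg
  have hdiff : ∀ p, ‖influenceIntegrand S b μ₁ x p - influenceIntegrand S b μ₂ x p‖ ≤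
      (b + 1) * tv := fun p =>
    (abs_influenceIntegrand_sub_le x hb.le h₂b.le p).trans <| mul_le_mul_of_nonneg_left
      (htv ▸ abs_toReal_sub_le_tvDist μ₁ μ₂ (measurableSet_closedBall.inter hS.measurableSet))
      (by linarith)
  have htv0 : 0 ≤ tv := htv ▸ tvDist_nonneg μ₁ μ₂
  calc |h μ₁ x - h μ₂ x| ≤ (b + 1) * tv := by
        rw [hh, hh]
        exact norm_integral_integral_sub_le (by rw [Measure.restrict_apply_univ]; exact prob_le_one)
          (by rw [Measure.restrict_apply_univ, hβm])
          (measurable_influenceIntegrand x hS.measurableSet μ₁).stronglyMeasurable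
          (measurable_influenceIntegrand x hS.measurableSet μ₂).stronglyMeasurable
          (abs_influenceIntegrand_le x hb.le h₁b.le) (abs_influenceIntegrand_le x hb.le h₂b.le)
          (by positivity) hdiff
    _ ≤ (2 * b + 1) * tv := by gcongr; linarith

/-- the elementary bound `|e^{−μ₁(A)} − e^{−μ₂(A)}| ≤ μ₁(A) − μ₂(A)` for
`μ₁(A) ≥ μ₂(A)`, and the resulting `(2b+1)`-smoothness of `J`:
`sup_x |h_{μ₁}(x) − h_{μ₂}(x)| ≤ (2b+1) ‖μ₁ − μ₂‖` in total variation. -/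
theorem influence_function_smoothness
    (S : Set R2) (hS : IsCompact S)
    (K : Set R2) (hK : K = closure (convexHull ℝ S))
    (η : Measure R2) [IsProbabilityMeasure η] (hη : η Sᶜ = 0)
    (βm : Measure ℝ) (hβm : βm (Set.Ici (0:ℝ)) = 1)
    (b : ℝ) (hb : 0 < b)
    (h : Measure R2 → R2 → ℝ)
    (hh : ∀ (μ : Measure R2) (x : R2), h μ x =
      ∫ y in S, (∫ t in Set.Ici (0:ℝ),
        ((μ (Metric.closedBall y t ∩ S)).toReal - (if ‖y - x‖ ≤ t then b else 0)) *
          Real.exp (-(μ (Metric.closedBall y t ∩ S)).toReal) ∂βm) ∂η)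
    (μ₁ μ₂ : Measure R2)
    (h₁K : μ₁ Kᶜ = 0) (h₁b : μ₁ Set.univ = ENNReal.ofReal b)
    (h₂K : μ₂ Kᶜ = 0) (h₂b : μ₂ Set.univ = ENNReal.ofReal b)
    (tv : ℝ)
    (htv : tv = sSup {r : ℝ | ∃ A : Set R2, MeasurableSet A ∧
        r = |(μ₁ A).toReal - (μ₂ A).toReal|}) :
    (∀ A : Set R2, MeasurableSet A → μ₂ A ≤ μ₁ A →
      |Real.exp (-(μ₁ A).toReal) - Real.exp (-(μ₂ A).toReal)|
        ≤ (μ₁ A).toReal - (μ₂ A).toReal) ∧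
    (∀ x : R2, |h μ₁ x - h μ₂ x| ≤ (2 * b + 1) * tv) :=
  influence_function_smoothness_general S hS η βm hβm b hb h hh μ₁ μ₂ h₁b h₂b tv htv
end
end

section
/- (Convergence of fc-FW.) Let {J(μ_k)} be a sequence bounded below by J* > −∞ satisfying J(μ_{k+1}) − J(μ_k) ≤ −min{ (b/(2LR²))·h_k², LR²/(2b) } for nonpositive numbers h_k := h_{μ_k}(x*(μ_k)). Then {J(μ_k)} converges, h_k → 0, and for all n ≥ k₀ (where k₀ is any index with |h_{k₀}| < LR²/b), min_{1≤k≤n} |h_k| ≤ n^{−1/2}·( (2LR²/b)(J(μ₁) − J*) )^{1/2}. -/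
/-!
Summing the decrease inequality telescopes to `∑ min (c h_k², d) ≤ J₁ - J*` with
`c = b/(2LR²)` and `d = LR²/(2b)`, so the summands tend to zero; once they are below `d` they
equal `c h_k²`, hence `h_k → 0`. For the rate, take `k ≤ n` minimising `|h_k|`: since
`|h_k| ≤ |h_{k₀}| < LR²/b = √(d/c)`, every summand is at least `c h_k²`, whence `n c h_k² ≤ J₁ - J*`.
-/

open Filter Finset Topology

section SufficientDecrease

variable {f g : ℕ → ℝ}

theorem sum_Ico_le_sub_of_sub_le_neg (hdec : ∀ k, f (k + 1) - f k ≤ -g k) {m n : ℕ}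
    (hmn : m ≤ n) : ∑ k ∈ Ico m n, g k ≤ f m - f n := by
  have hsum : ∑ k ∈ Ico m n, (f (k + 1) - f k) ≤ ∑ k ∈ Ico m n, -g k :=
    sum_le_sum fun k _ => hdec k
  rw [sum_Ico_sub f hmn, sum_neg_distrib] at hsum
  linarith

theorem tendsto_zero_of_sub_le_neg_of_le (hg : ∀ k, 0 ≤ g k)
    (hdec : ∀ k, f (k + 1) - f k ≤ -g k) {fstar : ℝ} (hbelow : ∀ k, fstar ≤ f k) :
    Tendsto g atTop (𝓝 0) := by
  refine (summable_of_sum_range_le (c := f 0 - fstar) hg fun n => ?_).tendsto_atTop_zero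
  rw [range_eq_Ico]
  linarith [sum_Ico_le_sub_of_sub_le_neg hdec n.zero_le, hbelow n]

end SufficientDecrease

theorem tendsto_zero_of_tendsto_min_mul_sq {ι : Type*} {l : Filter ι} {x : ι → ℝ} {c d : ℝ}
    (hc : 0 < c) (hd : 0 < d) (hx : Tendsto (fun k => min (c * x k ^ 2) d) l (𝓝 0)) :
    Tendsto x l (𝓝 0) := by
  have hsq : Tendsto (fun k => c * x k ^ 2) l (𝓝 0) := by
    refine hx.congr' ?_
    filter_upwards [hx.eventually (gt_mem_nhds hd)] with k hk
    exact min_eq_left (min_lt_iff.mp hk |>.resolve_right (lt_irrefl d)).le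
  have habs : Tendsto (fun k => |x k|) l (𝓝 0) := by
    have hx2 : Tendsto (fun k => x k ^ 2) l (𝓝 0) := by
      simpa [← mul_assoc, hc.ne'] using hsq.const_mul c⁻¹
    simpa [Real.sqrt_sq_eq_abs] using hx2.sqrt
  exact (tendsto_zero_iff_abs_tendsto_zero x).mpr habs

theorem exists_mem_card_mul_le_sum_min {ι : Type*} (s : Finset ι) (x : ι → ℝ) {c d : ℝ}
    (hc : 0 ≤ c) {k₀ : ι} (hk₀ : k₀ ∈ s) (hsmall : c * x k₀ ^ 2 ≤ d) :
    ∃ k ∈ s, #s * (c * x k ^ 2) ≤ ∑ i ∈ s, min (c * x i ^ 2) d := by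
  obtain ⟨k, hk, hmin⟩ := s.exists_min_image (fun i => x i ^ 2) ⟨k₀, hk₀⟩
  refine ⟨k, hk, ?_⟩
  rw [← nsmul_eq_mul]
  refine card_nsmul_le_sum s _ _ fun i hi => le_min ?_ ?_
  · exact mul_le_mul_of_nonneg_left (hmin i hi) hc
  · exact (mul_le_mul_of_nonneg_left (hmin k₀ hk₀) hc).trans hsmall

theorem abs_le_of_natCast_mul_mul_sq_le {n : ℕ} {c x S : ℝ} (hn : 0 < n) (hc : 0 < c)
    (hS : n * (c * x ^ 2) ≤ S) : |x| ≤ 1 / Real.sqrt n * Real.sqrt (c⁻¹ * S) := by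
  have hn' : (0 : ℝ) < n := by exact_mod_cast hn
  have hsq : x ^ 2 ≤ c⁻¹ * S / n := by
    rw [le_div_iff₀ hn', inv_mul_eq_div, le_div_iff₀ hc]
    linarith
  calc |x| = Real.sqrt (x ^ 2) := (Real.sqrt_sq_eq_abs x).symm
    _ ≤ Real.sqrt (c⁻¹ * S / n) := Real.sqrt_le_sqrt hsq
    _ = 1 / Real.sqrt n * Real.sqrt (c⁻¹ * S) := by
      rw [Real.sqrt_div' _ hn'.le]
      ring

theorem mul_sq_le_of_abs_lt {b L R x : ℝ} (hb : 0 < b) (hL : 0 < L) (hR : 0 < R)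
    (hx : |x| < L * R ^ 2 / b) : b / (2 * L * R ^ 2) * x ^ 2 ≤ L * R ^ 2 / (2 * b) := by
  have hsq : x ^ 2 ≤ (L * R ^ 2 / b) ^ 2 := by
    rw [← sq_abs]
    exact pow_le_pow_left₀ (abs_nonneg x) hx.le 2
  calc b / (2 * L * R ^ 2) * x ^ 2 ≤ b / (2 * L * R ^ 2) * (L * R ^ 2 / b) ^ 2 := by gcongr
    _ = L * R ^ 2 / (2 * b) := by field_simp

theorem fcFW_convergence_general
    (b L R : ℝ) (hb : 0 < b) (hL : 0 < L) (hR : 0 < R)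
    (J : ℕ → ℝ) (h : ℕ → ℝ) (Jstar : ℝ)
    (hbelow : ∀ k, Jstar ≤ J k)
    (hdec : ∀ k, J (k + 1) - J k ≤
      - min (b / (2 * L * R^2) * (h k)^2) (L * R^2 / (2 * b))) :
    (∃ l : ℝ, Tendsto J atTop (nhds l)) ∧
    Tendsto h atTop (nhds 0) ∧
    (∀ k₀ : ℕ, 1 ≤ k₀ → |h k₀| < L * R^2 / b →
      ∀ n : ℕ, k₀ ≤ n →
        ∃ k, 1 ≤ k ∧ k ≤ n ∧
          |h k| ≤ (1 / Real.sqrt n) *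
            Real.sqrt ((2 * L * R^2 / b) * (J 1 - Jstar))) := by
  have hc : 0 < b / (2 * L * R ^ 2) := by positivity
  have hd : 0 < L * R ^ 2 / (2 * b) := by positivity
  have hm : ∀ k, 0 ≤ min (b / (2 * L * R ^ 2) * h k ^ 2) (L * R ^ 2 / (2 * b)) :=
    fun k => le_min (by positivity) hd.le
  have hanti : Antitone J := antitone_nat_of_succ_le fun k => by linarith [hdec k, hm k]
  refine ⟨⟨_, tendsto_atTop_ciInf hanti ⟨Jstar, Set.forall_mem_range.mpr hbelow⟩⟩,
    tendsto_zero_of_tendsto_min_mul_sq hc hd (tendsto_zero_of_sub_le_neg_of_le hm hdec hbelow),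
    fun k₀ hk₀ hsmall n hn => ?_⟩
  obtain ⟨k, hk, hkS⟩ := exists_mem_card_mul_le_sum_min (Icc 1 n) h hc.le
    (mem_Icc.mpr ⟨hk₀, hn⟩) (mul_sq_le_of_abs_lt hb hL hR hsmall)
  have hsum : ∑ i ∈ Icc 1 n, min (b / (2 * L * R ^ 2) * h i ^ 2) (L * R ^ 2 / (2 * b))
      ≤ J 1 - Jstar := by
    rw [← Ico_add_one_right_eq_Icc]
    linarith [sum_Ico_le_sub_of_sub_le_neg hdec (by omega : 1 ≤ n + 1), hbelow (n + 1)]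
  rw [Nat.card_Icc, Nat.add_sub_cancel] at hkS
  have hbound := abs_le_of_natCast_mul_mul_sq_le (by omega) hc (hkS.trans hsum)
  rw [inv_div] at hbound
  exact ⟨k, (mem_Icc.mp hk).1, (mem_Icc.mp hk).2, hbound⟩

/-- convergence of fc-FW. If `{J(μ_k)}` is bounded below by `J*` and
satisfies the sufficient-decrease inequality with nonpositive influence values `h_k`,
then `{J(μ_k)}` converges, `h_k → 0`, and for any `k₀ ≥ 1` with `|h_{k₀}| < LR²/b` and
any `n ≥ k₀`, `min_{1≤k≤n} |h_k| ≤ n^{−1/2} √((2LR²/b)(J(μ₁) − J*))`. -/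
theorem fcFW_convergence
    (b L R : ℝ) (hb : 0 < b) (hL : 0 < L) (hR : 0 < R)
    (J : ℕ → ℝ) (h : ℕ → ℝ) (Jstar : ℝ)
    (hbelow : ∀ k, Jstar ≤ J k)
    (hneg : ∀ k, h k ≤ 0)
    (hdec : ∀ k, J (k + 1) - J k ≤
      - min (b / (2 * L * R^2) * (h k)^2) (L * R^2 / (2 * b))) :
    (∃ l : ℝ, Tendsto J atTop (nhds l)) ∧
    Tendsto h atTop (nhds 0) ∧
    (∀ k₀ : ℕ, 1 ≤ k₀ → |h k₀| < L * R^2 / b →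
      ∀ n : ℕ, k₀ ≤ n →
        ∃ k, 1 ≤ k ∧ k ≤ n ∧
          |h k| ≤ (1 / Real.sqrt n) *
            Real.sqrt ((2 * L * R^2 / b) * (J 1 - Jstar))) :=
  fcFW_convergence_general b L R hb hL hR J h Jstar hbelow hdec
end

section
/- (Optimal measure for two demand points.) Let η = λ₁δ_{y₁} + λ₂δ_{y₂} with λ₁ + λ₂ = 1, λ₁, λ₂ > 0, and suppose e^{−b} ≤ λ₁/λ₂ ≤ e^{b}. Define α₁ = b/2 + (1/2)log(λ₁/λ₂), α₂ = b − α₁, and μ* = α₁δ_{y₁} + α₂δ_{y₂}. Then for every x in the segment [y₁, y₂], the influence function satisfies h_{μ*}(x) = √(λ₁λ₂)·b·e^{−b/2}·( β(‖x−y₁‖) + β(‖x−y₂‖) − β(‖y₁−y₂‖) − β(0) ) ≥ 0; hence μ* is optimal. -/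
/-
The ball masses `μ*(B̄(yᵢ, t))` take only the values `αᵢ` (for `t < d := ‖y₁ - y₂‖`) and `b`, so
every `dβ`-integral is a sum of constants times `β`-increments. The choice of `α₁` is the one for
which `λ₁ e^{-α₁} = λ₂ e^{-α₂} = √(λ₁λ₂) e^{-b/2}`; then the influence function collapses to
`√(λ₁λ₂) b e^{-b/2} (β r₁ + β r₂ - β d - β 0)` with `rᵢ = ‖x - yᵢ‖`, and `r₁ + r₂ = d` on the
segment makes this nonnegative by concavity of `β`. For optimality, an admissible `ν` has
`ν{y₁} + ν{y₂} ≤ b`, so AM-GM gives `λ₁ e^{-ν{y₁}} + λ₂ e^{-ν{y₂}} ≥ 2 √(λ₁λ₂) e^{-b/2}`, the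
value of the same expression at `μ*`.
-/

open MeasureTheory Metric Set
open scoped ENNReal

noncomputable section

open Real

theorem ConcaveOn.map_add_add_map_zero_le {f : ℝ → ℝ} (hf : ConcaveOn ℝ (Ici 0) f) {a b : ℝ}
    (ha : 0 ≤ a) (hb : 0 ≤ b) : f (a + b) + f 0 ≤ f a + f b := by
  rcases (add_nonneg ha hb).eq_or_lt with hs | hs
  · obtain ⟨rfl, rfl⟩ : a = 0 ∧ b = 0 := ⟨by linarith, by linarith⟩
    simp
  -- `u = (v / (a + b)) • 0 + (u / (a + b)) • (a + b)`
  have hcomb : ∀ {u v : ℝ}, 0 ≤ u → 0 ≤ v → u + v = a + b →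
      v / (a + b) * f 0 + u / (a + b) * f (a + b) ≤ f u := by
    intro u v hu hv huv
    have := hf.2 (mem_Ici.2 le_rfl) (mem_Ici.2 hs.le) (div_nonneg hv hs.le) (div_nonneg hu hs.le)
      (by field_simp; linarith)
    simpa [div_mul_cancel₀ _ hs.ne'] using this
  calc f (a + b) + f 0
      = (b / (a + b) * f 0 + a / (a + b) * f (a + b))
        + (a / (a + b) * f 0 + b / (a + b) * f (a + b)) := by field_simp; ring
    _ ≤ f a + f b := add_le_add (hcomb ha hb rfl) (hcomb hb ha (add_comm b a))

theorem mul_exp_neg_half_add_log_div {p q : ℝ} (hp : 0 < p) (hq : 0 < q) (b : ℝ) :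
    p * exp (-(b / 2 + log (p / q) / 2)) = √(p * q) * exp (-b / 2) := by
  have hexp : -(b / 2 + log (p / q) / 2) = log (q / p) / 2 + -b / 2 := by
    rw [← inv_div q p, log_inv]; ring
  rw [hexp, exp_add, exp_half, exp_log (div_pos hq hp), ← mul_assoc,
    show p * q = p ^ 2 * (q / p) by field_simp, sqrt_mul (sq_nonneg p), sqrt_sq hp.le]

theorem mul_exp_neg_sub_half_add_log_div {p q : ℝ} (hp : 0 < p) (hq : 0 < q) (b : ℝ) :
    q * exp (-(b - (b / 2 + log (p / q) / 2))) = √(p * q) * exp (-b / 2) := by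
  rw [show b - (b / 2 + log (p / q) / 2) = b / 2 + log (q / p) / 2 by
    rw [← inv_div q p, log_inv]; ring, mul_comm p]
  exact mul_exp_neg_half_add_log_div hq hp b

theorem half_add_log_div_mem_Icc {p q b : ℝ} (hp : 0 < p) (hq : 0 < q) (hlo : exp (-b) ≤ p / q)
    (hhi : p / q ≤ exp b) : b / 2 + log (p / q) / 2 ∈ Icc 0 b := by
  have hge := (le_log_iff_exp_le (div_pos hp hq)).2 hlo
  have hle := (log_le_iff_le_exp (div_pos hp hq)).2 hhi
  constructor <;> linarith

theorem two_mul_sqrt_mul_exp_neg_half_le {p q : ℝ} (hp : 0 ≤ p) (hq : 0 ≤ q) {b c₁ c₂ : ℝ}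
    (hc : c₁ + c₂ ≤ b) : 2 * (√(p * q) * exp (-b / 2)) ≤ p * exp (-c₁) + q * exp (-c₂) := by
  have hs : (p * exp (-c₁)) * (q * exp (-c₂)) = (√(p * q) * exp (-(c₁ + c₂) / 2)) ^ 2 := by
    rw [mul_pow, sq_sqrt (mul_nonneg hp hq), sq, ← exp_add, mul_mul_mul_comm, ← exp_add]
    ring_nf
  have hp' : 0 ≤ p * exp (-c₁) := by positivity
  have hq' : 0 ≤ q * exp (-c₂) := by positivity
  calc 2 * (√(p * q) * exp (-b / 2)) ≤ 2 * (√(p * q) * exp (-(c₁ + c₂) / 2)) := by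
        gcongr
    _ ≤ p * exp (-c₁) + q * exp (-c₂) := by
      nlinarith [sq_nonneg (p * exp (-c₁) - q * exp (-c₂))]

theorem StieltjesFunction.measureReal_Ico_of_continuous (f : StieltjesFunction ℝ)
    (hf : Continuous f) {a b : ℝ} (hab : a ≤ b) : f.measure.real (Ico a b) = f b - f a := by
  rw [measureReal_def, f.measure_Ico, hf.continuousWithinAt.leftLim_eq,
    hf.continuousWithinAt.leftLim_eq, ENNReal.toReal_ofReal (sub_nonneg.2 (f.mono hab))]

theorem StieltjesFunction.measure_Ici_ne_top (f : StieltjesFunction ℝ) {a C : ℝ}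
    (hf : ∀ t, a ≤ t → f t ≤ C) : f.measure (Ici a) ≠ ∞ := by
  have hbdd : BddAbove (range f) := ⟨C, by
    rintro _ ⟨t, rfl⟩
    exact (f.mono (le_max_left t a)).trans (hf _ (le_max_right t a))⟩
  rw [f.measure_Ici (tendsto_atTop_ciSup f.mono hbdd)]
  exact ENNReal.ofReal_ne_top

theorem setIntegral_Ici_eq_of_eqOn_Ico_Ico_Ici {μ : Measure ℝ} {g : ℝ → ℝ} {a r c u v w : ℝ}
    (har : a ≤ r) (hrc : r ≤ c) (hμ : μ (Ici a) ≠ ∞) (hu : EqOn g (fun _ ↦ u) (Ico a r))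
    (hv : EqOn g (fun _ ↦ v) (Ico r c)) (hw : EqOn g (fun _ ↦ w) (Ici c)) :
    ∫ t in Ici a, g t ∂μ = u * μ.real (Ico a r) + v * μ.real (Ico r c) + w * μ.real (Ici c) := by
  have hint : ∀ {s : Set ℝ} {k : ℝ}, s ⊆ Ici a → MeasurableSet s → EqOn g (fun _ ↦ k) s →
      IntegrableOn g s μ := fun hs hm hk ↦
    (integrableOn_congr_fun hk hm).2 (integrableOn_const (measure_ne_top_of_subset hs hμ))
  have hu' := hint Ico_subset_Ici_self measurableSet_Ico hu
  have hv' := hint (fun t ht ↦ har.trans ht.1) measurableSet_Ico hv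
  have hw' := hint (Ici_subset_Ici.2 (har.trans hrc)) measurableSet_Ici hw
  rw [← Ico_union_Ici_eq_Ici (har.trans hrc),
    setIntegral_union ((Iio_disjoint_Ici le_rfl).mono_left Ico_subset_Iio_self) measurableSet_Ici
      (Ico_union_Ico_eq_Ico har hrc ▸ hu'.union hv') hw',
    ← Ico_union_Ico_eq_Ico har hrc,
    setIntegral_union Ico_disjoint_Ico_same measurableSet_Ico hu' hv',
    setIntegral_congr_fun measurableSet_Ico hu, setIntegral_congr_fun measurableSet_Ico hv,
    setIntegral_congr_fun measurableSet_Ici hw]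
  simp only [setIntegral_const, smul_eq_mul, mul_comm]

theorem setIntegral_Ici_eq_of_eqOn_Ico_Ici {μ : Measure ℝ} {g : ℝ → ℝ} {a c u w : ℝ}
    (hac : a ≤ c) (hμ : μ (Ici a) ≠ ∞) (hu : EqOn g (fun _ ↦ u) (Ico a c))
    (hw : EqOn g (fun _ ↦ w) (Ici c)) :
    ∫ t in Ici a, g t ∂μ = u * μ.real (Ico a c) + w * μ.real (Ici c) := by
  simpa using setIntegral_Ici_eq_of_eqOn_Ico_Ico_Ici hac le_rfl hμ hu (v := 0) (by simp) hw

section PseudoMetricSpace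

variable {E : Type*} [PseudoMetricSpace E]

theorem closedBall_inter_pair_of_lt {y z : E} {t : ℝ} (ht₀ : 0 ≤ t) (ht : t < dist y z) :
    closedBall y t ∩ {y, z} = {y} := by
  rw [inter_insert_of_mem (mem_closedBall_self ht₀), inter_singleton_eq_empty.2, insert_empty_eq]
  rw [mem_closedBall, dist_comm]
  exact ht.not_ge

theorem closedBall_inter_pair_of_le {y z : E} {t : ℝ} (ht : dist y z ≤ t) :
    closedBall y t ∩ {y, z} = {y, z} :=
  inter_eq_right.2 (pair_subset (mem_closedBall_self (dist_nonneg.trans ht)) (mem_closedBall'.2 ht))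

theorem setIntegral_exp_neg_measure_closedBall_inter_pair [MeasurableSpace E] {ρ : Measure ℝ}
    (hρ : ρ (Ici 0) ≠ ∞) (ν : Measure E) (y z : E) :
    ∫ t in Ici 0, exp (-(ν (closedBall y t ∩ {y, z})).toReal) ∂ρ =
      exp (-(ν {y}).toReal) * ρ.real (Ico 0 (dist y z))
        + exp (-(ν {y, z}).toReal) * ρ.real (Ici (dist y z)) :=
  setIntegral_Ici_eq_of_eqOn_Ico_Ici dist_nonneg hρ
    (fun _ ht ↦ by simp only [closedBall_inter_pair_of_lt ht.1 ht.2])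
    (fun _ ht ↦ by simp only [closedBall_inter_pair_of_le ht])

theorem setIntegral_influence_closedBall_inter_pair [MeasurableSpace E] (β : StieltjesFunction ℝ)
    (hβ : Continuous β) (hβfin : β.measure (Ici 0) ≠ ∞) (ν : Measure E) {y z : E} {p b r : ℝ}
    (hp : (ν {y}).toReal = p) (hb : (ν {y, z}).toReal = b) (hr₀ : 0 ≤ r) (hr : r ≤ dist y z) :
    ∫ t in Ici 0, ((ν (closedBall y t ∩ {y, z})).toReal - if r ≤ t then b else 0) *
        exp (-(ν (closedBall y t ∩ {y, z})).toReal) ∂β.measure =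
      exp (-p) * (p * (β (dist y z) - β 0) - b * (β (dist y z) - β r)) := by
  rw [setIntegral_Ici_eq_of_eqOn_Ico_Ico_Ici hr₀ hr hβfin (u := p * exp (-p))
      (v := (p - b) * exp (-p)) (w := 0)
      (fun t ht ↦ by
        simp only [closedBall_inter_pair_of_lt ht.1 (ht.2.trans_le hr), hp, if_neg ht.2.not_ge,
          sub_zero])
      (fun t ht ↦ by simp only [closedBall_inter_pair_of_lt (hr₀.trans ht.1) ht.2, hp, if_pos ht.1])
      (fun t ht ↦ by simp only [closedBall_inter_pair_of_le ht, hb, if_pos (hr.trans ht), sub_self,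
          zero_mul]),
    β.measureReal_Ico_of_continuous hβ hr₀, β.measureReal_Ico_of_continuous hβ hr]
  ring

theorem setIntegral_exp_neg_two_points_le [MeasurableSpace E] [MeasurableSingletonClass E]
    {ρ : Measure ℝ} (hρ : ρ (Ici 0) ≠ ∞) {y₁ y₂ : E} (hy : y₁ ≠ y₂) {lam₁ lam₂ α₁ α₂ b : ℝ}
    (hlam₁ : 0 ≤ lam₁) (hlam₂ : 0 ≤ lam₂) (hK₁ : lam₁ * exp (-α₁) = √(lam₁ * lam₂) * exp (-b / 2))
    (hK₂ : lam₂ * exp (-α₂) = √(lam₁ * lam₂) * exp (-b / 2)) {μ ν : Measure E}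
    (hμ₁ : (μ {y₁}).toReal = α₁) (hμ₂ : (μ {y₂}).toReal = α₂) (hμ : (μ {y₁, y₂}).toReal = b)
    (hν : ν univ ≤ ENNReal.ofReal b) :
    lam₁ * ∫ t in Ici 0, exp (-(μ (closedBall y₁ t ∩ {y₁, y₂})).toReal) ∂ρ
      + lam₂ * ∫ t in Ici 0, exp (-(μ (closedBall y₂ t ∩ {y₁, y₂})).toReal) ∂ρ
      ≤ lam₁ * ∫ t in Ici 0, exp (-(ν (closedBall y₁ t ∩ {y₁, y₂})).toReal) ∂ρ
        + lam₂ * ∫ t in Ici 0, exp (-(ν (closedBall y₂ t ∩ {y₁, y₂})).toReal) ∂ρ := by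
  have : IsFiniteMeasure ν := ⟨hν.trans_lt ENNReal.ofReal_lt_top⟩
  have hνS : (ν {y₁, y₂}).toReal ≤ b := by
    rw [← ENNReal.toReal_ofReal (hμ ▸ ENNReal.toReal_nonneg : 0 ≤ b)]
    exact ENNReal.toReal_mono ENNReal.ofReal_ne_top ((measure_mono (subset_univ _)).trans hν)
  have hν₁₂ : (ν {y₁, y₂}).toReal = (ν {y₁}).toReal + (ν {y₂}).toReal := by
    rw [insert_eq, measure_union (disjoint_singleton.2 hy) (measurableSet_singleton y₂),
      ENNReal.toReal_add (measure_ne_top _ _) (measure_ne_top _ _)]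
  have hAM := two_mul_sqrt_mul_exp_neg_half_le hlam₁ hlam₂ (hν₁₂ ▸ hνS)
  have hexp : exp (-b) ≤ exp (-(ν {y₁, y₂}).toReal) := exp_le_exp.2 (neg_le_neg hνS)
  rw [setIntegral_exp_neg_measure_closedBall_inter_pair hρ _ y₁ y₂,
    setIntegral_exp_neg_measure_closedBall_inter_pair hρ _ y₁ y₂, pair_comm y₁ y₂,
    setIntegral_exp_neg_measure_closedBall_inter_pair hρ _ y₂ y₁,
    setIntegral_exp_neg_measure_closedBall_inter_pair hρ _ y₂ y₁, dist_comm y₂ y₁,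
    pair_comm y₂ y₁, hμ₁, hμ₂, hμ]
  have hA := measureReal_nonneg (μ := ρ) (s := Ico 0 (dist y₁ y₂))
  have hB := measureReal_nonneg (μ := ρ) (s := Ici (dist y₁ y₂))
  linear_combination mul_le_mul_of_nonneg_right hAM hA
    + mul_le_mul_of_nonneg_left hexp (mul_nonneg (add_nonneg hlam₁ hlam₂) hB)
    + ρ.real (Ico 0 (dist y₁ y₂)) * (hK₁ + hK₂)

end PseudoMetricSpace

section Segment

variable {E : Type*} [SeminormedAddCommGroup E] [NormedSpace ℝ E]

theorem norm_sub_add_norm_sub_of_mem_segment {y z x : E} (hx : x ∈ segment ℝ y z) :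
    ‖x - y‖ + ‖x - z‖ = ‖y - z‖ := by
  simpa [dist_eq_norm, norm_sub_rev x y] using dist_add_dist_of_mem_segment hx

theorem setIntegral_influence_two_points_eq [MeasurableSpace E] (β : StieltjesFunction ℝ)
    (hβ : Continuous β) (hβfin : β.measure (Ici 0) ≠ ∞) {y₁ y₂ x : E} (hx : x ∈ segment ℝ y₁ y₂)
    {μ : Measure E} {lam₁ lam₂ α₁ α₂ b K : ℝ} (hμ₁ : (μ {y₁}).toReal = α₁)
    (hμ₂ : (μ {y₂}).toReal = α₂) (hμ : (μ {y₁, y₂}).toReal = b) (hα : α₁ + α₂ = b)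
    (hK₁ : lam₁ * exp (-α₁) = K) (hK₂ : lam₂ * exp (-α₂) = K) :
    lam₁ * ∫ t in Ici 0, ((μ (closedBall y₁ t ∩ {y₁, y₂})).toReal
          - if ‖x - y₁‖ ≤ t then b else 0) *
        exp (-(μ (closedBall y₁ t ∩ {y₁, y₂})).toReal) ∂β.measure
      + lam₂ * ∫ t in Ici 0, ((μ (closedBall y₂ t ∩ {y₁, y₂})).toReal
          - if ‖x - y₂‖ ≤ t then b else 0) *
        exp (-(μ (closedBall y₂ t ∩ {y₁, y₂})).toReal) ∂β.measure
      = K * b * (β ‖x - y₁‖ + β ‖x - y₂‖ - β ‖y₁ - y₂‖ - β 0) := by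
  have hr := norm_sub_add_norm_sub_of_mem_segment hx
  rw [setIntegral_influence_closedBall_inter_pair β hβ hβfin _ hμ₁ hμ (norm_nonneg _)
      (by rw [dist_eq_norm]; linarith [norm_nonneg (x - y₂)]), pair_comm y₁ y₂,
    setIntegral_influence_closedBall_inter_pair β hβ hβfin _ hμ₂ (pair_comm y₁ y₂ ▸ hμ)
      (norm_nonneg _) (by rw [dist_eq_norm']; linarith [norm_nonneg (x - y₁)]),
    dist_eq_norm, dist_eq_norm' y₂]
  linear_combination (α₁ * (β ‖y₁ - y₂‖ - β 0) - b * (β ‖y₁ - y₂‖ - β ‖x - y₁‖)) * hK₁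
    + (α₂ * (β ‖y₁ - y₂‖ - β 0) - b * (β ‖y₁ - y₂‖ - β ‖x - y₂‖)) * hK₂
    + K * (β ‖y₁ - y₂‖ - β 0) * hα

end Segment

theorem two_demand_points_optimal_general
    (y₁ y₂ : R2) (hy : y₁ ≠ y₂)
    (b : ℝ)
    (lam₁ lam₂ : ℝ) (hlam₁ : 0 < lam₁) (hlam₂ : 0 < lam₂)
    (hlo : Real.exp (-b) ≤ lam₁ / lam₂) (hhi : lam₁ / lam₂ ≤ Real.exp b)
    (β : StieltjesFunction ℝ)
    (hβcont : Continuous (fun t : ℝ => β t))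
    (hβconc : StrictConcaveOn ℝ (Set.Ici (0:ℝ)) (fun t : ℝ => β t))
    (hβrange : ∀ t : ℝ, 0 ≤ t → β t ∈ Set.Icc (0:ℝ) 1)
    (α₁ α₂ : ℝ)
    (hα₁ : α₁ = b / 2 + Real.log (lam₁ / lam₂) / 2) (hα₂ : α₂ = b - α₁)
    (μstar : Measure R2)
    (hμstar : μstar = ENNReal.ofReal α₁ • Measure.dirac y₁
                      + ENNReal.ofReal α₂ • Measure.dirac y₂)
    (h : R2 → ℝ)
    (hh : ∀ x : R2, h x =
      lam₁ * ∫ t in Set.Ici (0:ℝ),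
        ((μstar (Metric.closedBall y₁ t ∩ {y₁, y₂})).toReal
            - (if ‖x - y₁‖ ≤ t then b else 0)) *
          Real.exp (-(μstar (Metric.closedBall y₁ t ∩ {y₁, y₂})).toReal) ∂β.measure
      + lam₂ * ∫ t in Set.Ici (0:ℝ),
        ((μstar (Metric.closedBall y₂ t ∩ {y₁, y₂})).toReal
            - (if ‖x - y₂‖ ≤ t then b else 0)) *
          Real.exp (-(μstar (Metric.closedBall y₂ t ∩ {y₁, y₂})).toReal) ∂β.measure)
    (J : Measure R2 → ℝ)
    (hJ : ∀ ν : Measure R2, J ν =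
      lam₁ * ∫ t in Set.Ici (0:ℝ),
        Real.exp (-(ν (Metric.closedBall y₁ t ∩ {y₁, y₂})).toReal) ∂β.measure
      + lam₂ * ∫ t in Set.Ici (0:ℝ),
        Real.exp (-(ν (Metric.closedBall y₂ t ∩ {y₁, y₂})).toReal) ∂β.measure) :
    (∀ x ∈ segment ℝ y₁ y₂,
      h x = Real.sqrt (lam₁ * lam₂) * b * Real.exp (-b / 2) *
          (β ‖x - y₁‖ + β ‖x - y₂‖ - β ‖y₁ - y₂‖ - β 0)
      ∧ 0 ≤ h x) ∧
    (∀ ν : Measure R2, ν (segment ℝ y₁ y₂)ᶜ = 0 →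
      ν Set.univ = ENNReal.ofReal b → J μstar ≤ J ν) := by
  have hα₁mem : α₁ ∈ Icc 0 b := hα₁ ▸ half_add_log_div_mem_Icc hlam₁ hlam₂ hlo hhi
  have hα₂₀ : 0 ≤ α₂ := by linarith [hα₁mem.2]
  have hα : α₁ + α₂ = b := by linarith
  have hb : 0 ≤ b := hα₁mem.1.trans hα₁mem.2
  have hK₁ : lam₁ * exp (-α₁) = √(lam₁ * lam₂) * exp (-b / 2) :=
    hα₁ ▸ mul_exp_neg_half_add_log_div hlam₁ hlam₂ b
  have hK₂ : lam₂ * exp (-α₂) = √(lam₁ * lam₂) * exp (-b / 2) := by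
    rw [hα₂, hα₁]
    exact mul_exp_neg_sub_half_add_log_div hlam₁ hlam₂ b
  have hβfin := β.measure_Ici_ne_top fun t ht ↦ (hβrange t ht).2
  have hμ₁ : (μstar {y₁}).toReal = α₁ := by simp [hμstar, hy.symm, hα₁mem.1]
  have hμ₂ : (μstar {y₂}).toReal = α₂ := by simp [hμstar, hy, hα₂₀]
  have hμ : (μstar {y₁, y₂}).toReal = b := by
    simp [hμstar, Measure.dirac_apply', ENNReal.toReal_add, hα₁mem.1, hα₂₀, hα]
  refine ⟨fun x hx ↦ ?_, fun ν _ hν ↦ ?_⟩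
  · have heq : h x = √(lam₁ * lam₂) * b * exp (-b / 2) *
        (β ‖x - y₁‖ + β ‖x - y₂‖ - β ‖y₁ - y₂‖ - β 0) := by
      rw [hh, setIntegral_influence_two_points_eq β hβcont hβfin hx hμ₁ hμ₂ hμ hα hK₁ hK₂]
      ring
    refine ⟨heq, heq ▸ mul_nonneg (by positivity) ?_⟩
    have hsum := hβconc.concaveOn.map_add_add_map_zero_le (norm_nonneg (x - y₁))
      (norm_nonneg (x - y₂))
    rw [norm_sub_add_norm_sub_of_mem_segment hx] at hsum
    linarith
  · rw [hJ, hJ]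
    exact setIntegral_exp_neg_two_points_le hβfin hy hlam₁.le hlam₂.le hK₁ hK₂ hμ₁ hμ₂ hμ hν.le

/-- optimal measure for two demand points. With
`η = λ₁δ_{y₁} + λ₂δ_{y₂}`, `e^{−b} ≤ λ₁/λ₂ ≤ e^{b}`, `α₁ = b/2 + (1/2)log(λ₁/λ₂)`,
`α₂ = b − α₁`, and `μ* = α₁δ_{y₁} + α₂δ_{y₂}`, the influence function satisfies, for
every `x` on the segment `[y₁, y₂]`,
`h_{μ*}(x) = √(λ₁λ₂)·b·e^{−b/2}(β‖x−y₁‖ + β‖x−y₂‖ − β‖y₁−y₂‖ − β(0)) ≥ 0`;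
hence `μ*` is optimal among measures of mass `b` on the segment. -/
theorem two_demand_points_optimal
    (y₁ y₂ : R2) (hy : y₁ ≠ y₂)
    (b : ℝ) (hb : 0 < b)
    (lam₁ lam₂ : ℝ) (hlam₁ : 0 < lam₁) (hlam₂ : 0 < lam₂) (hsum : lam₁ + lam₂ = 1)
    (hlo : Real.exp (-b) ≤ lam₁ / lam₂) (hhi : lam₁ / lam₂ ≤ Real.exp b)
    (β : StieltjesFunction ℝ)
    (hβcont : Continuous (fun t : ℝ => β t))
    (hβconc : StrictConcaveOn ℝ (Set.Ici (0:ℝ)) (fun t : ℝ => β t))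
    (hβrange : ∀ t : ℝ, 0 ≤ t → β t ∈ Set.Icc (0:ℝ) 1)
    (α₁ α₂ : ℝ)
    (hα₁ : α₁ = b / 2 + Real.log (lam₁ / lam₂) / 2) (hα₂ : α₂ = b - α₁)
    (μstar : Measure R2)
    (hμstar : μstar = ENNReal.ofReal α₁ • Measure.dirac y₁
                      + ENNReal.ofReal α₂ • Measure.dirac y₂)
    (h : R2 → ℝ)
    (hh : ∀ x : R2, h x =
      lam₁ * ∫ t in Set.Ici (0:ℝ),
        ((μstar (Metric.closedBall y₁ t ∩ {y₁, y₂})).toReal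
            - (if ‖x - y₁‖ ≤ t then b else 0)) *
          Real.exp (-(μstar (Metric.closedBall y₁ t ∩ {y₁, y₂})).toReal) ∂β.measure
      + lam₂ * ∫ t in Set.Ici (0:ℝ),
        ((μstar (Metric.closedBall y₂ t ∩ {y₁, y₂})).toReal
            - (if ‖x - y₂‖ ≤ t then b else 0)) *
          Real.exp (-(μstar (Metric.closedBall y₂ t ∩ {y₁, y₂})).toReal) ∂β.measure)
    (J : Measure R2 → ℝ)
    (hJ : ∀ ν : Measure R2, J ν =
      lam₁ * ∫ t in Set.Ici (0:ℝ),
        Real.exp (-(ν (Metric.closedBall y₁ t ∩ {y₁, y₂})).toReal) ∂β.measure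
      + lam₂ * ∫ t in Set.Ici (0:ℝ),
        Real.exp (-(ν (Metric.closedBall y₂ t ∩ {y₁, y₂})).toReal) ∂β.measure) :
    (∀ x ∈ segment ℝ y₁ y₂,
      h x = Real.sqrt (lam₁ * lam₂) * b * Real.exp (-b / 2) *
          (β ‖x - y₁‖ + β ‖x - y₂‖ - β ‖y₁ - y₂‖ - β 0)
      ∧ 0 ≤ h x) ∧
    (∀ ν : Measure R2, ν (segment ℝ y₁ y₂)ᶜ = 0 →
      ν Set.univ = ENNReal.ofReal b → J μstar ≤ J ν) :=
  two_demand_points_optimal_general y₁ y₂ hy b lam₁ lam₂ hlam₁ hlam₂ hlo hhi β hβcont hβconc hβrange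
    α₁ α₂ hα₁ hα₂ μstar hμstar h hh J hJ
end
end

section
/- If x₁ and x₂ both lie in an axis-aligned rectangle S_{j,k} whose sides are determined by consecutive order statistics of the coordinates of demand points y₁,…,y_n, then for every yᵢ and every t ∈ [0,1], ‖t·x₁ + (1−t)·x₂ − yᵢ‖₁ = t‖x₁ − yᵢ‖₁ + (1−t)‖x₂ − yᵢ‖₁ (the L₁ distance to each demand point is affine on each grid rectangle). -/
open Set

noncomputable section

/- On a segment `[u, v]` that does not straddle `w`, the sign of `· - w` is constant,
so `|· - w|` is affine there. -/

lemma abs_combo_sub_of_le {u v w t : ℝ} (hu : w ≤ u) (hv : w ≤ v) (ht : t ∈ Icc (0 : ℝ) 1) :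
    |t * u + (1 - t) * v - w| = t * |u - w| + (1 - t) * |v - w| := by
  obtain ⟨ht0, ht1⟩ := ht
  rw [abs_of_nonneg (by nlinarith), abs_of_nonneg (sub_nonneg.2 hu),
    abs_of_nonneg (sub_nonneg.2 hv)]
  ring

lemma abs_combo_sub_of_ge {u v w t : ℝ} (hu : u ≤ w) (hv : v ≤ w) (ht : t ∈ Icc (0 : ℝ) 1) :
    |t * u + (1 - t) * v - w| = t * |u - w| + (1 - t) * |v - w| := by
  obtain ⟨ht0, ht1⟩ := ht
  rw [abs_of_nonpos (by nlinarith), abs_of_nonpos (sub_nonpos.2 hu),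
    abs_of_nonpos (sub_nonpos.2 hv)]
  ring

lemma abs_combo_sub_of_mem_Icc {p q u v w t : ℝ} (hw : w ≤ p ∨ q ≤ w)
    (hu : u ∈ Icc p q) (hv : v ∈ Icc p q) (ht : t ∈ Icc (0 : ℝ) 1) :
    |t * u + (1 - t) * v - w| = t * |u - w| + (1 - t) * |v - w| := by
  rcases hw with hw | hw
  · exact abs_combo_sub_of_le (hw.trans hu.1) (hw.trans hv.1) ht
  · exact abs_combo_sub_of_ge (hu.2.trans hw) (hv.2.trans hw) ht

theorem L1_distance_affine_on_rectangle_general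
    (n : ℕ) (y : Fin n → R2)
    (a c : ℕ → ℝ)
    (j k : ℕ)
    (hy : ∀ i : Fin n,
      (y i 0 ≤ a j ∨ a (j + 1) ≤ y i 0) ∧ (y i 1 ≤ c k ∨ c (k + 1) ≤ y i 1))
    (d1 : R2 → R2 → ℝ)
    (hd1 : ∀ u v : R2, d1 u v = |u 0 - v 0| + |u 1 - v 1|)
    (x₁ x₂ : R2)
    (hx₁ : x₁ 0 ∈ Set.Icc (a j) (a (j + 1)) ∧ x₁ 1 ∈ Set.Icc (c k) (c (k + 1)))
    (hx₂ : x₂ 0 ∈ Set.Icc (a j) (a (j + 1)) ∧ x₂ 1 ∈ Set.Icc (c k) (c (k + 1))) :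
    ∀ i : Fin n, ∀ t ∈ Set.Icc (0:ℝ) 1,
      d1 (t • x₁ + (1 - t) • x₂) (y i)
        = t * d1 x₁ (y i) + (1 - t) * d1 x₂ (y i) := by
  intro i t ht
  simp only [hd1, PiLp.add_apply, PiLp.smul_apply, smul_eq_mul]
  rw [abs_combo_sub_of_mem_Icc (hy i).1 hx₁.1 hx₂.1 ht,
    abs_combo_sub_of_mem_Icc (hy i).2 hx₁.2 hx₂.2 ht]
  ring

/-- on a grid rectangle `S_{j,k} = [a_j, a_{j+1}] × [c_k, c_{k+1}]` whose
sides are determined by consecutive order statistics of the demand-point coordinates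
(so every demand point has each coordinate weakly outside the corresponding side
interval), the `L₁` distance to each demand point is affine:
`‖t x₁ + (1−t) x₂ − yᵢ‖₁ = t‖x₁ − yᵢ‖₁ + (1−t)‖x₂ − yᵢ‖₁`. -/
theorem L1_distance_affine_on_rectangle
    (n : ℕ) (y : Fin n → R2)
    (a c : ℕ → ℝ) (ha : Monotone a) (hc : Monotone c)
    (j k : ℕ)
    (hy : ∀ i : Fin n,
      (y i 0 ≤ a j ∨ a (j + 1) ≤ y i 0) ∧ (y i 1 ≤ c k ∨ c (k + 1) ≤ y i 1))
    (d1 : R2 → R2 → ℝ)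
    (hd1 : ∀ u v : R2, d1 u v = |u 0 - v 0| + |u 1 - v 1|)
    (x₁ x₂ : R2)
    (hx₁ : x₁ 0 ∈ Set.Icc (a j) (a (j + 1)) ∧ x₁ 1 ∈ Set.Icc (c k) (c (k + 1)))
    (hx₂ : x₂ 0 ∈ Set.Icc (a j) (a (j + 1)) ∧ x₂ 1 ∈ Set.Icc (c k) (c (k + 1))) :
    ∀ i : Fin n, ∀ t ∈ Set.Icc (0:ℝ) 1,
      d1 (t • x₁ + (1 - t) • x₂) (y i)
        = t * d1 x₁ (y i) + (1 - t) * d1 x₂ (y i) :=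
  L1_distance_affine_on_rectangle_general n y a c j k hy d1 hd1 x₁ x₂ hx₁ hx₂
end
end

section
/- (Support of the L₁-optimal measure lies on the grid.) Suppose μ* is optimal for the L₁ problem, the optimality criterion h_{μ*}(x) ≥ 0 holds for all x in cvx(S) with minimum value 0 attained, supp(μ*) ⊆ {x : h_{μ*}(x) = 0} μ*-a.s., and on each grid rectangle the minimizers of h_{μ*} are among vertices. Then supp(μ*) ⊆ V := {(a_{(j)}, b_{(k)}) : j,k = 1,…,n}, the O(n²) set of grid points generated by the demand coordinates. -/
/-!
A support point `x` of `μ` lies in `K`, where `h ≥ 0`, and has `h x = 0`; hence it minimizes `h`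
over any covering rectangle through it, since that rectangle lies in `K`. The vertex property of
minimizers then puts each coordinate of `x` at an endpoint of the rectangle's side, i.e. on the grid.
-/

open MeasureTheory Metric Set
open scoped ENNReal

noncomputable section

lemma exists_lt_eq_of_eq_or_eq_succ {α : Type*} {a : ℕ → α} {n j : ℕ} {t : α}
    (hj : j + 1 < n) (ht : t = a j ∨ t = a (j + 1)) : ∃ i, i < n ∧ t = a i := by
  rcases ht with ht | ht
  · exact ⟨j, by omega, ht⟩
  · exact ⟨j + 1, hj, ht⟩

theorem optimal_support_on_grid_general
    (n : ℕ) (a c : ℕ → ℝ)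
    (K : Set R2) (h : R2 → ℝ) (μ : Measure R2)
    (Rect : ℕ → ℕ → Set R2)
    (hsuppK : ∀ x : R2, (∀ ε > (0:ℝ), 0 < μ (Metric.ball x ε)) → x ∈ K)
    (hpos : ∀ x ∈ K, 0 ≤ h x)
    (hzero : ∀ x : R2, (∀ ε > (0:ℝ), 0 < μ (Metric.ball x ε)) → h x = 0)
    (hcover : ∀ x ∈ K, ∃ j k : ℕ, j + 1 < n ∧ k + 1 < n ∧
      Rect j k ⊆ K ∧ x ∈ Rect j k)
    (hvert : ∀ j k : ℕ, j + 1 < n → k + 1 < n → ∀ x ∈ Rect j k,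
      (∀ z ∈ Rect j k, h x ≤ h z) →
      (x 0 = a j ∨ x 0 = a (j + 1)) ∧ (x 1 = c k ∨ x 1 = c (k + 1))) :
    ∀ x : R2, (∀ ε > (0:ℝ), 0 < μ (Metric.ball x ε)) →
      (∃ j, j < n ∧ x 0 = a j) ∧ (∃ k, k < n ∧ x 1 = c k) := by
  intro x hx
  obtain ⟨j, k, hj, hk, hRectK, hxRect⟩ := hcover x (hsuppK x hx)
  have hmin : ∀ z ∈ Rect j k, h x ≤ h z := fun z hz => hzero x hx ▸ hpos z (hRectK hz)
  obtain ⟨hx0, hx1⟩ := hvert j k hj hk x hxRect hmin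
  exact ⟨exists_lt_eq_of_eq_or_eq_succ hj hx0, exists_lt_eq_of_eq_or_eq_succ hk hx1⟩

/-- support of the `L₁`-optimal measure lies on the grid. If the optimal
measure `μ*` has influence function `h` that is nonnegative on `cvx(S)`, its support is
contained in the zero set of `h`, `cvx(S)` is covered by the grid rectangles, and on each
rectangle the minimizers of `h` are among the vertices, then every support point of `μ*`
is a grid point `(a_j, c_k)`. -/
theorem optimal_support_on_grid
    (n : ℕ) (a c : ℕ → ℝ)
    (K : Set R2) (h : R2 → ℝ) (μ : Measure R2)
    (Rect : ℕ → ℕ → Set R2)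
    (hRect : ∀ j k : ℕ, Rect j k =
      {x : R2 | x 0 ∈ Set.Icc (a j) (a (j + 1)) ∧ x 1 ∈ Set.Icc (c k) (c (k + 1))})
    (hsuppK : ∀ x : R2, (∀ ε > (0:ℝ), 0 < μ (Metric.ball x ε)) → x ∈ K)
    (hpos : ∀ x ∈ K, 0 ≤ h x)
    (hzero : ∀ x : R2, (∀ ε > (0:ℝ), 0 < μ (Metric.ball x ε)) → h x = 0)
    (hcover : ∀ x ∈ K, ∃ j k : ℕ, j + 1 < n ∧ k + 1 < n ∧
      Rect j k ⊆ K ∧ x ∈ Rect j k)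
    (hvert : ∀ j k : ℕ, j + 1 < n → k + 1 < n → ∀ x ∈ Rect j k,
      (∀ z ∈ Rect j k, h x ≤ h z) →
      (x 0 = a j ∨ x 0 = a (j + 1)) ∧ (x 1 = c k ∨ x 1 = c (k + 1))) :
    ∀ x : R2, (∀ ε > (0:ℝ), 0 < μ (Metric.ball x ε)) →
      (∃ j, j < n ∧ x 0 = a j) ∧ (∃ k, k < n ∧ x 1 = c k) :=
  optimal_support_on_grid_general n a c K h μ Rect hsuppK hpos hzero hcover hvert
end
end
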